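/- arXiv:1604.07911 — 6 statements merged into one kernel-verified Lean document; each statement's English description precedes it below -/
import Mathlib

section
/- Let π satisfy Assumption 1 and let x : ℕ → ℝ satisfy x_i ≥ -1 for all i. If Σ_{i=1}^∞ x_i² = ∞ and limsup_{n→∞} S_n/A_n² > 0, then limsup_{n→∞} K_n^π = ∞. -/
open MeasureTheory Filter Set

/-- Partial sum `S_n = x_1 + ... + x_n`. -/
noncomputable def S (x : ℕ → ℝ) (n : ℕ) : ℝ := ∑ i ∈ Finset.range n, x i

/-- Sum of squares `A_n² = x_1² + ... + x_n²`. -/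
noncomputable def A2 (x : ℕ → ℝ) (n : ℕ) : ℝ := ∑ i ∈ Finset.range n, (x i) ^ 2

/-- Capital process of the Bayesian strategy with prior density `π`:
`K_n^π = ∫_0^1 ∏_{i=1}^n (1 + ε x_i) π(ε) dε`. -/
noncomputable def K (π : ℝ → ℝ) (x : ℕ → ℝ) (n : ℕ) : ℝ :=
  ∫ ε in Set.Ioo (0 : ℝ) 1, (∏ i ∈ Finset.range n, (1 + ε * x i)) * π ε

/-- Assumption 1: `π` is a prior density, bounded below by `δπ` near the origin,
and `ε ↦ ε·π(ε)` is (weakly) increasing near the origin. -/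
def Assumption1 (π : ℝ → ℝ) (επ δπ : ℝ) : Prop :=
  επ ∈ Set.Ioo (0 : ℝ) 1 ∧ 0 < δπ ∧
  (∀ ε ∈ Set.Icc (0 : ℝ) 1, 0 ≤ π ε) ∧
  MeasureTheory.IntegrableOn π (Set.Icc (0 : ℝ) 1) ∧
  (∀ ε ∈ Set.Ioo (0 : ℝ) επ, δπ ≤ π ε) ∧
  MonotoneOn (fun ε => ε * π ε) (Set.Ioo (0 : ℝ) επ)

/-!
Since `log (1 + t) ≥ t - 2t²` for `t ≥ -1/2`, every `ε ∈ [0, 1/2]` gives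
`∏ (1 + ε x_i) ≥ exp (ε S_n - 2ε² A_n²)`. Fix `c > 0` with `S_n > c A_n²` infinitely often.
For such `n` and `ε ≤ c/4` the exponent is at least `ε c A_n² / 2`, so integrating over
`ε ∈ [a/2, a]`, where `π ≥ δ_π`, yields `K_n ≥ (a/2) δ_π exp (a c A_n² / 4)`.
As `A_n² → ∞`, these lower bounds are unbounded.
-/

lemma exp_sub_two_mul_sq_le_one_add {t : ℝ} (ht : -(1 / 2) ≤ t) :
    Real.exp (t - 2 * t ^ 2) ≤ 1 + t := by
  have h1t : 0 < 1 + t := by linarith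
  rw [← Real.le_log_iff_exp_le h1t]
  refine le_trans ?_ (Real.one_sub_inv_le_log_of_pos h1t)
  have : 1 - (1 + t)⁻¹ = t / (1 + t) := by field_simp; ring
  rw [this, le_div_iff₀ h1t]
  nlinarith [mul_nonneg (sq_nonneg t) (by linarith : (0 : ℝ) ≤ 1 + 2 * t)]

lemma exp_sub_le_prod_one_add_mul {x : ℕ → ℝ} (hx : ∀ i, -1 ≤ x i) {ε : ℝ} (hε₀ : 0 ≤ ε)
    (hε : ε ≤ 1 / 2) (n : ℕ) :
    Real.exp (ε * S x n - 2 * ε ^ 2 * A2 x n) ≤ ∏ i ∈ Finset.range n, (1 + ε * x i) := by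
  have hsum : ε * S x n - 2 * ε ^ 2 * A2 x n
      = ∑ i ∈ Finset.range n, (ε * x i - 2 * (ε * x i) ^ 2) := by
    simp only [S, A2, Finset.mul_sum, ← Finset.sum_sub_distrib]
    exact Finset.sum_congr rfl fun i _ => by ring
  rw [hsum, Real.exp_sum]
  refine Finset.prod_le_prod (fun i _ => (Real.exp_pos _).le) fun i _ => ?_
  exact exp_sub_two_mul_sq_le_one_add (by nlinarith [hx i])

lemma exp_le_prod_one_add_mul_of_mul_A2_le_S {x : ℕ → ℝ} (hx : ∀ i, -1 ≤ x i) {c ε : ℝ}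
    {n : ℕ} (hS : c * A2 x n ≤ S x n) (hε₀ : 0 ≤ ε) (hε : ε ≤ 1 / 2) (hεc : ε ≤ c / 4) :
    Real.exp (ε * c / 2 * A2 x n) ≤ ∏ i ∈ Finset.range n, (1 + ε * x i) := by
  refine (Real.exp_le_exp.2 ?_).trans (exp_sub_le_prod_one_add_mul hx hε₀ hε n)
  have hA : 0 ≤ A2 x n := Finset.sum_nonneg fun i _ => sq_nonneg _
  nlinarith [mul_le_mul_of_nonneg_left hS hε₀,
    mul_nonneg (mul_nonneg hε₀ hA) (by linarith : 0 ≤ c / 4 - ε)]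

lemma integrableOn_prod_one_add_mul_mul (x : ℕ → ℝ) {π : ℝ → ℝ}
    (hπ : IntegrableOn π (Icc 0 1)) (n : ℕ) :
    IntegrableOn (fun ε => (∏ i ∈ Finset.range n, (1 + ε * x i)) * π ε) (Ioo 0 1) :=
  (hπ.continuousOn_mul (by fun_prop) isCompact_Icc).mono_set Ioo_subset_Icc_self

lemma mul_le_K_of_le_on_Icc {π : ℝ → ℝ} {x : ℕ → ℝ} (hx : ∀ i, -1 ≤ x i)
    (hπ₀ : ∀ ε ∈ Icc (0 : ℝ) 1, 0 ≤ π ε) (hπ : IntegrableOn π (Icc 0 1)) {a b m : ℝ}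
    (ha : 0 < a) (hab : a ≤ b) (hb : b < 1) {n : ℕ}
    (hm : ∀ ε ∈ Icc a b, m ≤ (∏ i ∈ Finset.range n, (1 + ε * x i)) * π ε) :
    (b - a) * m ≤ K π x n := by
  have hsub : Icc a b ⊆ Ioo 0 1 := Icc_subset_Ioo ha hb
  have hint := integrableOn_prod_one_add_mul_mul x hπ n
  have hnonneg : ∀ ε ∈ Ioo (0 : ℝ) 1, 0 ≤ (∏ i ∈ Finset.range n, (1 + ε * x i)) * π ε :=
    fun ε hε => mul_nonneg (Finset.prod_nonneg fun i _ => by nlinarith [hx i, hε.1, hε.2])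
      (hπ₀ ε (Ioo_subset_Icc_self hε))
  calc (b - a) * m = ∫ _ in Icc a b, m := by
        simp [hab]
    _ ≤ ∫ ε in Icc a b, (∏ i ∈ Finset.range n, (1 + ε * x i)) * π ε :=
        setIntegral_mono_on (integrableOn_const measure_Icc_lt_top.ne) (hint.mono_set hsub)
          measurableSet_Icc hm
    _ ≤ K π x n :=
        setIntegral_mono_set hint (ae_restrict_of_forall_mem measurableSet_Ioo hnonneg)
          hsub.eventuallyLE

lemma mul_exp_le_K {π : ℝ → ℝ} {x : ℕ → ℝ} (hx : ∀ i, -1 ≤ x i)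
    (hπ₀ : ∀ ε ∈ Icc (0 : ℝ) 1, 0 ≤ π ε) (hπ : IntegrableOn π (Icc 0 1)) {e δ : ℝ}
    (hπδ : ∀ ε ∈ Ioo 0 e, δ ≤ π ε) (hδ : 0 ≤ δ) {a c : ℝ} (ha : 0 < a) (ha₁ : a ≤ 1 / 2)
    (hae : a < e) (hac : a ≤ c / 4) {n : ℕ} (hS : c * A2 x n ≤ S x n) :
    a / 2 * (δ * Real.exp (a * c / 4 * A2 x n)) ≤ K π x n := by
  have hcA : 0 ≤ c * A2 x n :=
    mul_nonneg (by linarith) (Finset.sum_nonneg fun i _ => sq_nonneg _)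
  have key := mul_le_K_of_le_on_Icc (m := δ * Real.exp (a * c / 4 * A2 x n)) hx hπ₀ hπ
    (half_pos ha) (half_le_self ha.le) (by linarith) fun ε ⟨hε₁, hε₂⟩ => by
      have hexp : Real.exp (a * c / 4 * A2 x n) ≤ ∏ i ∈ Finset.range n, (1 + ε * x i) :=
        (Real.exp_le_exp.2 (by nlinarith [mul_nonneg (sub_nonneg.2 hε₁) hcA])).trans
          (exp_le_prod_one_add_mul_of_mul_A2_le_S hx hS (by linarith) (by linarith)
            (by linarith))
      rw [mul_comm]
      exact mul_le_mul hexp (hπδ ε ⟨by linarith, by linarith⟩) hδ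
        ((Real.exp_pos _).le.trans hexp)
  rwa [sub_half] at key

lemma exists_pos_frequently_lt_of_pos_limsup {α : Type*} {l : Filter α} {u : α → ℝ}
    (h : 0 < limsup (fun n => (u n : EReal)) l) : ∃ c : ℝ, 0 < c ∧ ∃ᶠ n in l, c < u n := by
  obtain ⟨c, hc₀, hc⟩ := EReal.lt_iff_exists_real_btwn.1 h
  exact ⟨c, by exact_mod_cast hc₀,
    (frequently_lt_of_lt_limsup (by isBoundedDefault) hc).mono fun n hn => by exact_mod_cast hn⟩

lemma limsup_coe_eq_top_of_frequently_le {α : Type*} {l : Filter α} {u g : α → ℝ}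
    (hg : Tendsto g l atTop) (h : ∃ᶠ n in l, g n ≤ u n) :
    limsup (fun n => (u n : EReal)) l = ⊤ := by
  refine (EReal.eq_top_iff_forall_lt _).2 fun M => ?_
  refine (EReal.coe_lt_coe_iff.2 (lt_add_one M)).trans_le (le_limsup_of_frequently_le ?_)
  exact (h.and_eventually (hg.eventually_ge_atTop (M + 1))).mono fun n hn => by
    exact_mod_cast hn.2.trans hn.1

theorem slln_self_normalized (π : ℝ → ℝ) (επ δπ : ℝ) (hπ : Assumption1 π επ δπ)
    (x : ℕ → ℝ) (hx : ∀ i, -1 ≤ x i)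
    (hA : Filter.Tendsto (A2 x) Filter.atTop Filter.atTop)
    (hls : 0 < Filter.limsup (fun n => ((S x n / A2 x n : ℝ) : EReal)) Filter.atTop) :
    Filter.limsup (fun n => ((K π x n : ℝ) : EReal)) Filter.atTop = ⊤ := by
  obtain ⟨⟨hεπ₀, hεπ₁⟩, hδπ, hπ₀, hπ, hπδ, -⟩ := hπ
  obtain ⟨c, hc, hfreq⟩ := exists_pos_frequently_lt_of_pos_limsup hls
  have hS : ∃ᶠ n in atTop, c * A2 x n ≤ S x n :=
    (hfreq.and_eventually (hA.eventually_gt_atTop 0)).mono fun n hn =>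
      ((lt_div_iff₀ hn.2).1 hn.1).le
  set a := min (c / 4) (επ / 2)
  have ha : 0 < a := lt_min (by linarith) (by linarith)
  have hac : a ≤ c / 4 := min_le_left _ _
  have haε : a ≤ επ / 2 := min_le_right _ _
  refine limsup_coe_eq_top_of_frequently_le ?_ (hS.mono fun n hn =>
    mul_exp_le_K hx hπ₀ hπ hπδ hδπ.le ha (by linarith) (by linarith) hac hn)
  exact ((Real.tendsto_exp_atTop.comp (hA.const_mul_atTop (by positivity))).const_mul_atTop
    hδπ).const_mul_atTop (half_pos ha)
end

section
/- Let π satisfy Assumption 1 with constants ε_π, δ_π, let n ≥ 1 and let x_1,...,x_n be reals with x_i ≥ -1 for all i. If S_n > 0, S_n²/A_n² > max(2, 1/ε_π) and S_n³/A_n⁴ < 1/2, then K_n^π ≥ (1/(6e))·(1/A_n)·π(S_n/A_n²)·exp(S_n²/(2·A_n²)). -/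
open MeasureTheory Filter Set

/-!
On the window `ε ∈ (c, c + 1/(2 A_n)]` with `c = S_n / A_n²` the integrand of `K_n^π` is bounded
below by a constant multiple of `π(c) exp(S_n² / (2 A_n²))`. Indeed, `log(1 + u) ≥ u - (1/2 + ε) u²`
for `u = ε x_i ≥ -ε` turns the product into `exp(ε S_n - (1/2 + ε) ε² A_n²)`; completing the square,
`ε S_n - ε² A_n² / 2` loses at most `1/8` against its maximum `S_n² / (2 A_n²)` on the window, and
the cubic term `ε³ A_n²` is controlled by `S_n³ / A_n⁴ < 1/2`. Monotonicity of `ε π(ε)` gives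
`π(ε) ≥ (c/ε) π(c)`, and the window has length `1 / (2 A_n)`.
-/

lemma sub_sq_div_two_le_log_one_add {u : ℝ} (hu : 0 ≤ u) : u - u ^ 2 / 2 ≤ Real.log (1 + u) := by
  refine le_trans ?_ (Real.le_log_one_add_of_nonneg hu)
  rw [le_div_iff₀ (by linarith)]
  nlinarith [pow_nonneg hu 3]

lemma sub_sq_div_two_add_pow_three_le_log_one_add {u : ℝ} (hu : -1 / 2 ≤ u) (hu0 : u ≤ 0) :
    u - u ^ 2 / 2 + u ^ 3 ≤ Real.log (1 + u) := by
  set g : ℝ → ℝ := fun v => Real.log (1 + v) - (v - v ^ 2 / 2 + v ^ 3)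
  have hg : ∀ v, -1 < v → HasDerivAt g (v ^ 2 * (-2 - 3 * v) / (1 + v)) v := by
    intro v hv
    have hlog := ((hasDerivAt_id' v).const_add 1).log (by linarith)
    refine (hlog.sub (((hasDerivAt_id' v).sub ((hasDerivAt_pow 2 v).div_const 2)).add
      (hasDerivAt_pow 3 v))).congr_deriv ?_
    have : 1 + v ≠ 0 := by linarith
    field_simp
    ring
  have hanti : AntitoneOn g (Icc (-1 / 2) 0) := by
    refine antitoneOn_of_deriv_nonpos (convex_Icc _ _)
      (fun v hv => (hg v (by linarith [hv.1])).continuousAt.continuousWithinAt)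
      (fun v hv => ?_) (fun v hv => ?_) <;> rw [interior_Icc] at hv
    · exact (hg v (by linarith [hv.1])).differentiableAt.differentiableWithinAt
    · rw [(hg v (by linarith [hv.1])).deriv]
      exact div_nonpos_of_nonpos_of_nonneg
        (mul_nonpos_of_nonneg_of_nonpos (sq_nonneg v) (by linarith [hv.1])) (by linarith [hv.1])
  have h := hanti ⟨hu, hu0⟩ (right_mem_Icc.2 (by norm_num)) hu0
  simp only [g, add_zero, Real.log_one] at h
  linarith

lemma sub_mul_sq_le_log_one_add {ε u : ℝ} (hε0 : 0 ≤ ε) (hε : ε ≤ 1 / 2) (hu : -ε ≤ u) :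
    u - (1 / 2 + ε) * u ^ 2 ≤ Real.log (1 + u) := by
  rcases le_or_gt 0 u with hu0 | hu0
  · nlinarith [sub_sq_div_two_le_log_one_add hu0, sq_nonneg u]
  · nlinarith [sub_sq_div_two_add_pow_three_le_log_one_add (by linarith) hu0.le, sq_nonneg u]

lemma exp_le_prod_one_add_mul {ι : Type*} (s : Finset ι) {x : ι → ℝ} (hx : ∀ i ∈ s, -1 ≤ x i)
    {ε : ℝ} (hε0 : 0 ≤ ε) (hε : ε ≤ 1 / 2) :
    Real.exp (ε * ∑ i ∈ s, x i - (1 / 2 + ε) * ε ^ 2 * ∑ i ∈ s, x i ^ 2) ≤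
      ∏ i ∈ s, (1 + ε * x i) := by
  have hsum : ε * ∑ i ∈ s, x i - (1 / 2 + ε) * ε ^ 2 * ∑ i ∈ s, x i ^ 2
      = ∑ i ∈ s, (ε * x i - (1 / 2 + ε) * (ε * x i) ^ 2) := by
    simp only [Finset.mul_sum, ← Finset.sum_sub_distrib, mul_pow, mul_assoc]
  rw [hsum, Real.exp_sum]
  refine Finset.prod_le_prod (fun i _ => (Real.exp_pos _).le) fun i hi => ?_
  have hu : -ε ≤ ε * x i := by nlinarith [hx i hi]
  calc Real.exp (ε * x i - (1 / 2 + ε) * (ε * x i) ^ 2) ≤ Real.exp (Real.log (1 + ε * x i)) :=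
        Real.exp_le_exp.2 (sub_mul_sq_le_log_one_add hε0 hε hu)
    _ = 1 + ε * x i := Real.exp_log (by linarith)

lemma mul_le_K_of_le_on_Ioc {π : ℝ → ℝ} {x : ℕ → ℝ} {n : ℕ}
    (hπnn : ∀ ε ∈ Icc (0 : ℝ) 1, 0 ≤ π ε) (hπint : IntegrableOn π (Icc 0 1)) (hx : ∀ i, -1 ≤ x i)
    {c h m : ℝ} (hc : 0 ≤ c) (hh : 0 ≤ h) (hch : c + h < 1)
    (hm : ∀ ε ∈ Ioc c (c + h), m ≤ (∏ i ∈ Finset.range n, (1 + ε * x i)) * π ε) :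
    m * h ≤ K π x n := by
  have hsub : Ioc c (c + h) ⊆ Ioo 0 1 := fun ε hε => ⟨hc.trans_lt hε.1, hε.2.trans_lt hch⟩
  have hint : IntegrableOn (fun ε => (∏ i ∈ Finset.range n, (1 + ε * x i)) * π ε) (Icc 0 1) :=
    hπint.continuousOn_mul (by fun_prop) isCompact_Icc
  have hnonneg : ∀ ε ∈ Ioo (0 : ℝ) 1, 0 ≤ (∏ i ∈ Finset.range n, (1 + ε * x i)) * π ε :=
    fun ε hε => mul_nonneg (Finset.prod_nonneg fun i _ => by nlinarith [hx i, hε.1, hε.2])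
      (hπnn ε (Ioo_subset_Icc_self hε))
  calc m * h = m * volume.real (Ioc c (c + h)) := by
        rw [Real.volume_real_Ioc_of_le (by linarith), add_sub_cancel_left]
    _ ≤ ∫ ε in Ioc c (c + h), (∏ i ∈ Finset.range n, (1 + ε * x i)) * π ε :=
        setIntegral_ge_of_const_le_real measurableSet_Ioc measure_Ioc_lt_top.ne hm
          (hint.mono_set (hsub.trans Ioo_subset_Icc_self))
    _ ≤ K π x n :=
        setIntegral_mono_set (hint.mono_set Ioo_subset_Icc_self)
          ((ae_restrict_iff' measurableSet_Ioo).2 (.of_forall hnonneg)) hsub.eventuallyLE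

lemma div_le_of_monotoneOn_mul {π : ℝ → ℝ} {e c ε ρ : ℝ}
    (hmono : MonotoneOn (fun ε => ε * π ε) (Ioo 0 e)) (hc : c ∈ Ioo 0 e) (hε : ε ∈ Ioo 0 e)
    (hcε : c ≤ ε) (hερ : ε ≤ ρ * c) (hπc : 0 ≤ π c) : π c / ρ ≤ π ε := by
  have hmul : c * π c ≤ ε * π ε := hmono hc hε hcε
  have hπε : 0 ≤ π ε := (mul_nonneg_iff_of_pos_left hε.1).1 ((mul_nonneg hc.1.le hπc).trans hmul)
  have hρ : 0 < ρ := pos_of_mul_pos_left (hε.1.trans_le hερ) hc.1.le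
  rw [div_le_iff₀ hρ, ← mul_le_mul_iff_of_pos_left hc.1]
  calc c * π c ≤ ε * π ε := hmul
    _ ≤ ρ * c * π ε := mul_le_mul_of_nonneg_right hερ hπε
    _ = c * (π ε * ρ) := by ring

lemma mul_div_lt_half {s a M : ℝ} (hs : 0 < s) (ha : 0 < a) (hM : M < s ^ 2 / a)
    (h3 : s ^ 3 / a ^ 2 < 1 / 2) : M * (s / a) < 1 / 2 := by
  calc M * (s / a) < s ^ 2 / a * (s / a) := mul_lt_mul_of_pos_right hM (div_pos hs ha)
    _ = s ^ 3 / a ^ 2 := by field_simp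
    _ < 1 / 2 := h3

lemma div_add_one_div_two_sqrt_le {s a : ℝ} (hs : 0 < s) (ha : 0 < a) (h2 : 2 < s ^ 2 / a) :
    s / a + 1 / (2 * √a) ≤ 11 / 8 * (s / a) := by
  have hsqrt : 0 < √a := Real.sqrt_pos.2 ha
  have hsq : √a ^ 2 = a := Real.sq_sqrt ha.le
  rw [lt_div_iff₀ ha] at h2
  have h4 : 4 * √a ≤ 3 * s := by nlinarith
  have hwidth : 1 / (2 * √a) ≤ 3 / 8 * (s / a) := by
    rw [div_le_iff₀ (by positivity), show 3 / 8 * (s / a) * (2 * √a) = 3 * s * √a / (4 * a) by ring,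
      le_div_iff₀ (by positivity)]
    nlinarith
  linarith

lemma sq_div_two_mul_sub_le {s a ε : ℝ} (hs : 0 < s) (ha : 0 < a) (h3 : s ^ 3 / a ^ 2 < 1 / 2)
    (hwin : s / a + 1 / (2 * √a) ≤ 11 / 8 * (s / a)) (hε : ε ∈ Ioc (s / a) (s / a + 1 / (2 * √a))) :
    s ^ 2 / (2 * a) - 3 / 2 ≤ ε * s - (1 / 2 + ε) * ε ^ 2 * a := by
  have hsquare : ε * s - ε ^ 2 * a / 2 = s ^ 2 / (2 * a) - a / 2 * (ε - s / a) ^ 2 := by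
    field_simp; ring
  have hdev : a / 2 * (ε - s / a) ^ 2 ≤ 1 / 8 := by
    have h0 : 0 ≤ ε - s / a := by linarith [hε.1]
    have h1 : ε - s / a ≤ 1 / (2 * √a) := by linarith [hε.2]
    calc a / 2 * (ε - s / a) ^ 2 ≤ a / 2 * (1 / (2 * √a)) ^ 2 := by gcongr
      _ = 1 / 8 := by field_simp; rw [Real.sq_sqrt ha.le]; ring
  have hcube : ε ^ 3 * a ≤ 11 / 8 := by
    calc ε ^ 3 * a ≤ (11 / 8 * (s / a)) ^ 3 * a := by
          gcongr
          · exact (div_pos hs ha).le.trans hε.1.le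
          · exact hε.2.trans hwin
      _ = (11 / 8) ^ 3 * (s ^ 3 / a ^ 2) := by field_simp
      _ ≤ 11 / 8 := by nlinarith
  nlinarith

lemma one_div_six_exp_one_le : 1 / (6 * Real.exp 1) ≤ 4 / (11 * Real.exp (3 / 2)) := by
  have h : 1 / 2 ≤ Real.exp (-(1 / 2)) := by linarith [Real.add_one_le_exp (-(1 / 2))]
  have hexp : Real.exp 1 = Real.exp (3 / 2) * Real.exp (-(1 / 2)) := by
    rw [← Real.exp_add]; norm_num
  rw [div_le_div_iff₀ (by positivity) (by positivity), hexp]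
  nlinarith [Real.exp_pos (3 / 2)]

lemma exp_sq_div_sub_le_prod_one_add_mul {x : ℕ → ℝ} {n : ℕ} {ε : ℝ} (hx : ∀ i, -1 ≤ x i)
    (hS : 0 < S x n) (ha : 0 < A2 x n) (h3 : S x n ^ 3 / A2 x n ^ 2 < 1 / 2)
    (hwin : S x n / A2 x n + 1 / (2 * √(A2 x n)) ≤ 11 / 8 * (S x n / A2 x n))
    (hε : ε ∈ Ioc (S x n / A2 x n) (S x n / A2 x n + 1 / (2 * √(A2 x n)))) (hε2 : ε ≤ 1 / 2) :
    Real.exp (S x n ^ 2 / (2 * A2 x n) - 3 / 2) ≤ ∏ i ∈ Finset.range n, (1 + ε * x i) :=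
  (Real.exp_le_exp.2 (sq_div_two_mul_sub_le hS ha h3 hwin hε)).trans
    (exp_le_prod_one_add_mul _ (fun i _ => hx i) ((div_pos hS ha).le.trans hε.1.le) hε2)

theorem refined_inequality_general (π : ℝ → ℝ) (επ δπ : ℝ) (hπ : Assumption1 π επ δπ)
    (n : ℕ) (x : ℕ → ℝ) (hx : ∀ i, -1 ≤ x i)
    (hS : 0 < S x n)
    (h2 : max 2 (1 / επ) < (S x n) ^ 2 / A2 x n)
    (h3 : (S x n) ^ 3 / (A2 x n) ^ 2 < 1 / 2) :
    1 / (6 * Real.exp 1) * (1 / Real.sqrt (A2 x n)) * π (S x n / A2 x n) *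
      Real.exp ((S x n) ^ 2 / (2 * A2 x n)) ≤ K π x n := by
  obtain ⟨⟨hεπ, -⟩, -, hπnn, hπint, -, hπmono⟩ := hπ
  rw [max_lt_iff] at h2
  have ha : 0 < A2 x n := (div_pos_iff_of_pos_left (pow_pos hS 2)).1 (two_pos.trans h2.1)
  set c := S x n / A2 x n
  have hc : 0 < c := div_pos hS ha
  have hc4 : c < 1 / 4 := by linarith [mul_div_lt_half hS ha h2.1 h3]
  have hcεπ : c < επ / 2 := by
    have h := mul_div_lt_half hS ha h2.2 h3
    rw [one_div_mul_eq_div, div_lt_iff₀ hεπ] at h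
    linarith
  have hwin := div_add_one_div_two_sqrt_le hS ha h2.1
  have hπc : 0 ≤ π c := hπnn c ⟨hc.le, by linarith⟩
  calc _ ≤ 4 / (11 * Real.exp (3 / 2)) * (1 / √(A2 x n)) * π c *
        Real.exp (S x n ^ 2 / (2 * A2 x n)) := by
        gcongr ?_ * _ * _ * _
        exact one_div_six_exp_one_le
    _ = Real.exp (S x n ^ 2 / (2 * A2 x n) - 3 / 2) * (π c / (11 / 8)) * (1 / (2 * √(A2 x n))) := by
        rw [Real.exp_sub]; field_simp; ring
    _ ≤ K π x n := mul_le_K_of_le_on_Ioc hπnn hπint hx hc.le (by positivity) (by linarith)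
        fun ε hε => ?_
  have hεc : ε ≤ 11 / 8 * c := hε.2.trans hwin
  have hε0 : 0 < ε := hc.trans hε.1
  exact mul_le_mul (exp_sq_div_sub_le_prod_one_add_mul hx hS ha h3 hwin hε (by linarith))
    (div_le_of_monotoneOn_mul hπmono ⟨hc, by linarith⟩ ⟨hε0, by linarith⟩ hε.1.le hεc hπc)
    (by positivity) (Finset.prod_nonneg fun i _ => by nlinarith [hx i])

theorem refined_inequality (π : ℝ → ℝ) (επ δπ : ℝ) (hπ : Assumption1 π επ δπ)
    (n : ℕ) (hn : 1 ≤ n) (x : ℕ → ℝ) (hx : ∀ i, -1 ≤ x i)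
    (hS : 0 < S x n)
    (h2 : max 2 (1 / επ) < (S x n) ^ 2 / A2 x n)
    (h3 : (S x n) ^ 3 / (A2 x n) ^ 2 < 1 / 2) :
    1 / (6 * Real.exp 1) * (1 / Real.sqrt (A2 x n)) * π (S x n / A2 x n) *
      Real.exp ((S x n) ^ 2 / (2 * A2 x n)) ≤ K π x n :=
  refined_inequality_general π επ δπ hπ n x hx hS h2 h3
end

section
/- Let ψ satisfy Assumption 2 with constants M_ψ, δ_ψ. Then there exist ε_0 ∈ (0, min(1, 1/M_ψ)) and δ > 0 such that: F[ψ] is integrable on (0,ε_0); F[ψ](ε) ≥ δ for all ε ∈ (0,ε_0); and ε ↦ ε·F[ψ](ε) is (weakly) increasing on (0,ε_0). In particular, the function equal to F[ψ] on (0,ε_0) and to 0 on [ε_0,1] satisfies Assumption 1. -/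
open MeasureTheory Filter Set

/-- Assumption 2: `ψ` is positive and increasing on `(M,∞)`, the integral
`∫_M^∞ ψ(λ) e^{-ψ(λ)²/2} dλ/λ` is finite, and `λ ψ(λ) e^{-ψ(λ)²/2} > δ` on `(M,∞)`. -/
def Assumption2 (ψ : ℝ → ℝ) (M δ : ℝ) : Prop :=
  0 < M ∧ 0 < δ ∧
  (∀ l ∈ Set.Ioi M, 0 < ψ l) ∧
  MonotoneOn ψ (Set.Ioi M) ∧
  MeasureTheory.IntegrableOn (fun l => ψ l * Real.exp (-(ψ l) ^ 2 / 2) / l) (Set.Ioi M) ∧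
  (∀ l ∈ Set.Ioi M, δ < l * ψ l * Real.exp (-(ψ l) ^ 2 / 2))

/-- The functional `F[ψ](ε) = (ψ(1/ε)/ε)·exp(-ψ(1/ε)²/2)`. -/
noncomputable def Ffun (ψ : ℝ → ℝ) (ε : ℝ) : ℝ :=
  ψ (1 / ε) / ε * Real.exp (-(ψ (1 / ε)) ^ 2 / 2)

/-- `β(ε) = max(-2 ln(ε π(ε)), 1)`. -/
noncomputable def betaFun (π : ℝ → ℝ) (ε : ℝ) : ℝ :=
  max (-2 * Real.log (ε * π ε)) 1

/-- The functional `G[π](λ) = √(β(1/λ) + ln β(1/λ))`. -/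
noncomputable def Gfun (π : ℝ → ℝ) (l : ℝ) : ℝ :=
  Real.sqrt (betaFun π (1 / l) + Real.log (betaFun π (1 / l)))

/-! Substituting `λ = 1/ε` turns the three properties of `F[ψ]` near `0` into properties of `ψ`
near `∞`: integrability of `F[ψ]` on `(0, ε₀)` is the integrability condition of Assumption 2,
`F[ψ](ε) ≥ δψ` is its lower bound, and `ε F[ψ](ε) = ψ(λ) e^{-ψ(λ)²/2}` is increasing in `ε`
because `t ↦ t e^{-t²/2}` decreases on `[1, ∞)` and `ψ` is increasing, once `ψ ≥ 1`. That `ψ`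
is eventually at least `1` follows from the integrability condition: otherwise the integrand would be
bounded below by a multiple of `1/λ`. -/

open Real

lemma antitoneOn_mul_exp_neg_sq_half : AntitoneOn (fun t : ℝ => t * exp (-t ^ 2 / 2)) (Ici 1) := by
  intro s (hs : 1 ≤ s) t _ hst
  have hexp : 1 + (t - s) ≤ exp ((t ^ 2 - s ^ 2) / 2) := by
    nlinarith [add_one_le_exp ((t ^ 2 - s ^ 2) / 2)]
  have ht : t ≤ s * exp ((t ^ 2 - s ^ 2) / 2) := by
    nlinarith [mul_le_mul_of_nonneg_left hexp (by linarith : (0 : ℝ) ≤ s)]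
  calc t * exp (-t ^ 2 / 2) ≤ s * exp ((t ^ 2 - s ^ 2) / 2) * exp (-t ^ 2 / 2) := by gcongr
    _ = s * exp (-s ^ 2 / 2) := by rw [mul_assoc, ← exp_add]; ring_nf

lemma integrableOn_Ioo_zero_iff_integrableOn_Ioi_inv {a : ℝ} (ha : 0 < a) (g : ℝ → ℝ) :
    IntegrableOn g (Ioo 0 a) ↔ IntegrableOn (fun l => (l ^ 2)⁻¹ * g l⁻¹) (Ioi a⁻¹) := by
  have hderiv : ∀ l ∈ Ioi a⁻¹, HasDerivWithinAt (·⁻¹) (-(l ^ 2)⁻¹) (Ioi a⁻¹) l := fun l hl =>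
    (hasDerivAt_inv (lt_trans (inv_pos.2 ha) hl).ne').hasDerivWithinAt
  have himage : (·⁻¹) '' Ioi a⁻¹ = Ioo 0 a := by
    rw [image_inv_eq_inv, inv_Ioi₀ (inv_pos.2 ha), inv_inv]
  rw [← himage, integrableOn_image_iff_integrableOn_abs_deriv_smul measurableSet_Ioi hderiv
    inv_injective.injOn]
  simp only [abs_neg, abs_inv, abs_pow, sq_abs, smul_eq_mul]

lemma inv_sq_mul_Ffun_inv (ψ : ℝ → ℝ) {l : ℝ} (hl : l ≠ 0) :
    (l ^ 2)⁻¹ * Ffun ψ l⁻¹ = ψ l * exp (-(ψ l) ^ 2 / 2) / l := by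
  simp only [Ffun, one_div, inv_inv]
  field_simp

lemma mul_Ffun (ψ : ℝ → ℝ) {ε : ℝ} (hε : ε ≠ 0) :
    ε * Ffun ψ ε = ψ (1 / ε) * exp (-(ψ (1 / ε)) ^ 2 / 2) := by
  simp only [Ffun]
  field_simp

lemma lt_one_div_of_mem_Ioo_inv {l ε : ℝ} (hl : 0 < l) (hε : ε ∈ Ioo 0 l⁻¹) : l < 1 / ε := by
  rw [one_div, lt_inv_comm₀ hl hε.1]
  exact hε.2

namespace Assumption2

variable {ψ : ℝ → ℝ} {M δψ l : ℝ}

lemma eventually_one_le (hψ : Assumption2 ψ M δψ) : ∀ᶠ l in atTop, 1 ≤ ψ l := by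
  obtain ⟨hM, -, hpos, hmono, hint, -⟩ := hψ
  suffices ∃ l₀ ∈ Ioi M, 1 ≤ ψ l₀ by
    obtain ⟨l₀, hl₀M, hl₀⟩ := this
    exact eventually_atTop.2 ⟨l₀, fun l hl => hl₀.trans (hmono hl₀M (hl₀M.trans_le hl) hl)⟩
  by_contra! hψ1
  have hM1 : M + 1 ∈ Ioi M := by simp
  set c := ψ (M + 1) * exp (-1 / 2)
  have hc : 0 < c := mul_pos (hpos _ hM1) (exp_pos _)
  have hbound : ∀ l ∈ Ioi (M + 1), ‖c * l⁻¹‖ ≤ ψ l * exp (-(ψ l) ^ 2 / 2) / l := by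
    intro l hl
    have hlM : l ∈ Ioi M := (lt_add_one M).trans hl
    have hl0 : 0 < l := hM.trans hlM
    have hψl0 := hpos l hlM
    have hψl1 := hψ1 l hlM
    have hexp : exp (-1 / 2) ≤ exp (-(ψ l) ^ 2 / 2) := exp_le_exp.2 (by nlinarith)
    rw [norm_of_nonneg (by positivity), div_eq_mul_inv]
    gcongr
    exact mul_le_mul (hmono hM1 hlM hl.le) hexp (exp_pos _).le hψl0.le
  have hinv : IntegrableOn (fun l => c * l⁻¹) (Ioi (M + 1)) :=
    (hint.mono_set (Ioi_subset_Ioi (by linarith))).mono'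
      (by fun_prop) ((ae_restrict_iff' measurableSet_Ioi).2 (ae_of_all _ hbound))
  exact not_integrableOn_Ioi_inv ((integrable_const_mul_iff hc.ne'.isUnit _).1 hinv)

lemma integrableOn_Ffun (hψ : Assumption2 ψ M δψ) (hl : M < l) :
    IntegrableOn (Ffun ψ) (Ioo 0 l⁻¹) := by
  obtain ⟨hM, -, -, -, hint, -⟩ := hψ
  have hl0 : 0 < l := hM.trans hl
  rw [integrableOn_Ioo_zero_iff_integrableOn_Ioi_inv (inv_pos.2 hl0), inv_inv]
  refine (hint.mono_set (Ioi_subset_Ioi hl.le)).congr_fun (fun x hx => ?_) measurableSet_Ioi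
  exact (inv_sq_mul_Ffun_inv ψ (hl0.trans hx).ne').symm

lemma le_Ffun (hψ : Assumption2 ψ M δψ) (hl : M < l) : ∀ ε ∈ Ioo 0 l⁻¹, δψ ≤ Ffun ψ ε := by
  obtain ⟨hM, -, -, -, -, hlb⟩ := hψ
  intro ε hε
  rw [Ffun, div_eq_inv_mul, ← one_div]
  exact (hlb (1 / ε) (hl.trans (lt_one_div_of_mem_Ioo_inv (hM.trans hl) hε))).le

lemma monotoneOn_mul_Ffun (hψ : Assumption2 ψ M δψ) (hl : M < l) (hψl : 1 ≤ ψ l) :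
    MonotoneOn (fun ε => ε * Ffun ψ ε) (Ioo 0 l⁻¹) := by
  obtain ⟨hM, -, -, hmono, -, -⟩ := hψ
  have hlt : ∀ ε ∈ Ioo 0 l⁻¹, l < 1 / ε := fun ε => lt_one_div_of_mem_Ioo_inv (hM.trans hl)
  intro a ha b hb hab
  have hψab : ψ (1 / b) ≤ ψ (1 / a) :=
    hmono (hl.trans (hlt b hb)) (hl.trans (hlt a ha)) (one_div_le_one_div_of_le ha.1 hab)
  have hψb : 1 ≤ ψ (1 / b) := hψl.trans (hmono hl (hl.trans (hlt b hb)) (hlt b hb).le)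
  simp only [mul_Ffun ψ ha.1.ne', mul_Ffun ψ hb.1.ne']
  exact antitoneOn_mul_exp_neg_sq_half hψb (hψb.trans hψab) hψab

end Assumption2

lemma assumption1_ite_lt {g : ℝ → ℝ} {ε₀ δ : ℝ} (hε₀ : ε₀ ∈ Ioo (0 : ℝ) 1) (hδ : 0 < δ)
    (hg0 : 0 ≤ g 0) (hint : IntegrableOn g (Ioo 0 ε₀)) (hlow : ∀ ε ∈ Ioo (0 : ℝ) ε₀, δ ≤ g ε)
    (hmono : MonotoneOn (fun ε => ε * g ε) (Ioo (0 : ℝ) ε₀)) :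
    Assumption1 (fun ε => if ε < ε₀ then g ε else 0) ε₀ δ := by
  have hind : (fun ε => if ε < ε₀ then g ε else 0) = (Iio ε₀).indicator g := by
    ext ε; simp [indicator_apply]
  refine ⟨hε₀, hδ, fun ε hε => ?_, ?_, fun ε hε => ?_, fun a ha b hb hab => ?_⟩
  · dsimp only
    split_ifs with h
    · rcases hε.1.eq_or_lt with rfl | h0
      · exact hg0
      · exact hδ.le.trans (hlow ε ⟨h0, h⟩)
    · exact le_rfl
  · rw [hind, integrableOn_indicator_iff measurableSet_Iio]
    refine ((integrableOn_Ico_iff_integrableOn_Ioo).2 hint).mono_set fun ε hε => ⟨hε.2.1, hε.1⟩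
  · simpa [if_pos hε.2] using hlow ε hε
  · simpa [if_pos ha.2, if_pos hb.2] using hmono ha hb hab

theorem F_maps_to_Pi0 (ψ : ℝ → ℝ) (M δψ : ℝ) (hψ : Assumption2 ψ M δψ) :
    ∃ ε₀ ∈ Set.Ioo (0 : ℝ) (min 1 (1 / M)), ∃ δ > (0 : ℝ),
      MeasureTheory.IntegrableOn (Ffun ψ) (Set.Ioo 0 ε₀) ∧
      (∀ ε ∈ Set.Ioo (0 : ℝ) ε₀, δ ≤ Ffun ψ ε) ∧
      MonotoneOn (fun ε => ε * Ffun ψ ε) (Set.Ioo (0 : ℝ) ε₀) ∧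
      ∃ επ δπ, Assumption1 (fun ε => if ε < ε₀ then Ffun ψ ε else 0) επ δπ := by
  obtain ⟨l, hψl, hl⟩ := (hψ.eventually_one_le.and (eventually_gt_atTop (max M 1))).exists
  have hMl : M < l := (le_max_left M 1).trans_lt hl
  have h1l : 1 < l := (le_max_right M 1).trans_lt hl
  have hε₀ : l⁻¹ ∈ Ioo 0 (min 1 (1 / M)) := by
    refine ⟨by positivity, lt_min (inv_lt_one_of_one_lt₀ h1l) ?_⟩
    rw [one_div]
    exact inv_strictAntiOn hψ.1 (hψ.1.trans hMl) hMl
  have hint := hψ.integrableOn_Ffun hMl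
  have hlow := hψ.le_Ffun hMl
  have hmono := hψ.monotoneOn_mul_Ffun hMl hψl
  refine ⟨l⁻¹, hε₀, δψ, hψ.2.1, hint, hlow, hmono, l⁻¹, δψ, ?_⟩
  -- `Ffun ψ 0 = 0` because division by `0` returns `0`
  exact assumption1_ite_lt ⟨hε₀.1, hε₀.2.trans_le (min_le_left _ _)⟩ hψ.2.1 (by simp [Ffun])
    hint hlow hmono
end

section
/- Let π satisfy Assumption 1. Then there exist λ_0 > 0 and δ > 0 such that: G[π] is positive and (weakly) increasing on (λ_0,∞); ∫_{λ_0}^∞ G[π](λ)·e^{-G[π](λ)²/2} dλ/λ < ∞; and λ·G[π](λ)·e^{-G[π](λ)²/2} > δ for all λ > λ_0. In particular, G[π] satisfies Assumption 2. -/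
open MeasureTheory Filter Set

/-!
Write `h(ε) = ε π(ε)`. Integrability of `π` forces `h(ε₁) < e^{-1/2}` for some small `ε₁`, hence
`0 < h ≤ e^{-1/2}` on `(0, ε₁)` by monotonicity, and there `β = -2 log h`, so that
`√β · e^{-G²/2} = e^{-β/2} = h`. As `√β ≤ G ≤ √2 · √β`, at `ε = 1/λ` the quantity `λ G e^{-G²/2}`
lies between `π(1/λ) ≥ δ_π` and `√2 π(1/λ)`. The integrand `G e^{-G²/2}/λ` is thus dominated by
`√2 π(1/λ)/λ²`, whose integral over `(1/ε₁, ∞)` is `√2 ∫_0^{ε₁} π` after substituting `ε = 1/λ`.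
-/

open Real (exp log)

-- Otherwise `f ≥ c / ε` on `(0, a)`, and `ε⁻¹` is not integrable there.
lemma exists_mem_Ioo_mul_lt_of_integrableOn {f : ℝ → ℝ} {a c : ℝ} (ha : 0 < a) (hc : 0 < c)
    (hf : IntegrableOn f (Ioo 0 a)) : ∃ ε ∈ Ioo 0 a, ε * f ε < c := by
  by_contra! h
  have hinv : IntegrableOn (fun ε : ℝ => ε⁻¹) (Ioo 0 a) := by
    refine (hf.const_mul c⁻¹).mono' measurable_inv.aestronglyMeasurable ?_
    filter_upwards [ae_restrict_mem measurableSet_Ioo] with ε hε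
    rw [norm_inv, Real.norm_of_nonneg hε.1.le, inv_le_iff_one_le_mul₀ hε.1, mul_assoc,
      mul_comm (f ε), inv_mul_eq_div, one_le_div hc]
    exact h ε hε
  have := (intervalIntegrable_iff_integrableOn_Ioo_of_le ha.le).2 hinv
  simp [intervalIntegrable_inv_iff, ha.ne] at this

lemma sqrt_mul_exp_neg_add_log_div_two {b : ℝ} (hb : 0 < b) :
    √b * exp (-(b + log b) / 2) = exp (-b / 2) := by
  rw [Real.sqrt_eq_rpow, Real.rpow_def_of_pos hb, ← Real.exp_add]
  ring_nf

lemma one_le_betaFun (π : ℝ → ℝ) (ε : ℝ) : 1 ≤ betaFun π ε := le_max_right _ _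

lemma Gfun_sq (π : ℝ → ℝ) (l : ℝ) :
    Gfun π l ^ 2 = betaFun π (1 / l) + log (betaFun π (1 / l)) := by
  have hβ := one_le_betaFun π (1 / l)
  exact Real.sq_sqrt (by linarith [Real.log_nonneg hβ])

lemma sqrt_betaFun_le_Gfun (π : ℝ → ℝ) (l : ℝ) : √(betaFun π (1 / l)) ≤ Gfun π l :=
  Real.sqrt_le_sqrt (le_add_of_nonneg_right (Real.log_nonneg (one_le_betaFun π (1 / l))))

lemma Gfun_pos (π : ℝ → ℝ) (l : ℝ) : 0 < Gfun π l :=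
  (Real.sqrt_pos.2 (zero_lt_one.trans_le (one_le_betaFun π (1 / l)))).trans_le
    (sqrt_betaFun_le_Gfun π l)

lemma Gfun_le_sqrt_two_mul_sqrt_betaFun (π : ℝ → ℝ) (l : ℝ) :
    Gfun π l ≤ √2 * √(betaFun π (1 / l)) := by
  have hβ := one_le_betaFun π (1 / l)
  rw [← Real.sqrt_mul zero_le_two]
  exact Real.sqrt_le_sqrt (by linarith [Real.log_le_sub_one_of_pos (zero_lt_one.trans_le hβ)])

lemma betaFun_eq_of_le {π : ℝ → ℝ} {ε : ℝ} (h0 : 0 < ε * π ε) (h : ε * π ε ≤ exp (-1 / 2)) :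
    betaFun π ε = -2 * log (ε * π ε) := by
  have hlog := (Real.log_le_log h0 h).trans_eq (Real.log_exp _)
  exact max_eq_left (by linarith)

lemma sqrt_betaFun_mul_exp_neg_Gfun_sq {π : ℝ → ℝ} {l : ℝ} (h0 : 0 < 1 / l * π (1 / l))
    (h : 1 / l * π (1 / l) ≤ exp (-1 / 2)) :
    √(betaFun π (1 / l)) * exp (-Gfun π l ^ 2 / 2) = 1 / l * π (1 / l) := by
  rw [Gfun_sq, sqrt_mul_exp_neg_add_log_div_two (zero_lt_one.trans_le (one_le_betaFun π _)),
    betaFun_eq_of_le h0 h, show -(-2 * log (1 / l * π (1 / l))) / 2 = log (1 / l * π (1 / l))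
      by ring, Real.exp_log h0]

lemma one_div_mul_le_Gfun_mul_exp {π : ℝ → ℝ} {l : ℝ} (h0 : 0 < 1 / l * π (1 / l))
    (h : 1 / l * π (1 / l) ≤ exp (-1 / 2)) :
    1 / l * π (1 / l) ≤ Gfun π l * exp (-Gfun π l ^ 2 / 2) := by
  rw [← sqrt_betaFun_mul_exp_neg_Gfun_sq h0 h]
  gcongr
  exact sqrt_betaFun_le_Gfun π l

lemma Gfun_mul_exp_le {π : ℝ → ℝ} {l : ℝ} (h0 : 0 < 1 / l * π (1 / l))
    (h : 1 / l * π (1 / l) ≤ exp (-1 / 2)) :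
    Gfun π l * exp (-Gfun π l ^ 2 / 2) ≤ √2 * (1 / l * π (1 / l)) := by
  rw [← sqrt_betaFun_mul_exp_neg_Gfun_sq h0 h, ← mul_assoc]
  gcongr
  exact Gfun_le_sqrt_two_mul_sqrt_betaFun π l

lemma betaFun_antitoneOn {π : ℝ → ℝ} {s : Set ℝ} (hmono : MonotoneOn (fun ε => ε * π ε) s)
    (hpos : ∀ ε ∈ s, 0 < ε * π ε) : AntitoneOn (betaFun π) s := fun x hx y hy hxy =>
  max_le_max_right _ (by linarith [Real.log_le_log (hpos x hx) (hmono hx hy hxy)])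

lemma one_div_mem_Ioo_of_mem_Ioi_inv {a l : ℝ} (ha : 0 < a) (hl : l ∈ Ioi a⁻¹) :
    1 / l ∈ Ioo 0 a := by
  have hl0 : 0 < l := (inv_pos.2 ha).trans hl
  exact ⟨one_div_pos.2 hl0, (one_div_lt hl0 ha).2 (by rwa [one_div])⟩

lemma Gfun_monotoneOn {π : ℝ → ℝ} {a : ℝ} (ha : 0 < a)
    (hmono : MonotoneOn (fun ε => ε * π ε) (Ioo 0 a)) (hpos : ∀ ε ∈ Ioo 0 a, 0 < ε * π ε) :
    MonotoneOn (Gfun π) (Ioi a⁻¹) := by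
  intro l₁ h₁ l₂ h₂ hle
  have hβ : betaFun π (1 / l₁) ≤ betaFun π (1 / l₂) :=
    betaFun_antitoneOn hmono hpos (one_div_mem_Ioo_of_mem_Ioi_inv ha h₂)
      (one_div_mem_Ioo_of_mem_Ioi_inv ha h₁)
      (one_div_le_one_div_of_le ((inv_pos.2 ha).trans h₁) hle)
  have hlog := Real.log_le_log (zero_lt_one.trans_le (one_le_betaFun π _)) hβ
  exact Real.sqrt_le_sqrt (by linarith)

lemma integrableOn_Ioi_comp_one_div_div_sq {f : ℝ → ℝ} {a : ℝ} (ha : 0 < a)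
    (hf : IntegrableOn f (Ioo 0 a)) :
    IntegrableOn (fun x => f (1 / x) / x ^ 2) (Ioi a⁻¹) := by
  have hind : IntegrableOn ((Ioo 0 a).indicator f) (Ioi 0) :=
    ((integrable_indicator_iff measurableSet_Ioo).2 hf).integrableOn
  refine (((integrableOn_Ioi_comp_rpow_iff' _ (p := -1) (by norm_num)).2 hind).mono_set
    (Ioi_subset_Ioi (inv_pos.2 ha).le)).congr_fun (fun x hx => ?_) measurableSet_Ioi
  have hx0 : 0 < x := (inv_pos.2 ha).trans hx
  simp only [smul_eq_mul]
  rw [Real.rpow_neg_one, ← one_div, indicator_of_mem (one_div_mem_Ioo_of_mem_Ioi_inv ha hx),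
    show (-1 - 1 : ℝ) = -2 by norm_num, Real.rpow_neg hx0.le, Real.rpow_two,
    inv_mul_eq_div]

lemma integrableOn_Gfun_mul_exp_div {π : ℝ → ℝ} {a : ℝ} (ha : 0 < a)
    (hint : IntegrableOn π (Ioo 0 a)) (hpos : ∀ ε ∈ Ioo 0 a, 0 < ε * π ε)
    (hle : ∀ ε ∈ Ioo 0 a, ε * π ε ≤ exp (-1 / 2)) (hmono : MonotoneOn (Gfun π) (Ioi a⁻¹)) :
    IntegrableOn (fun l => Gfun π l * exp (-Gfun π l ^ 2 / 2) / l) (Ioi a⁻¹) := by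
  have hG : AEMeasurable (Gfun π) (volume.restrict (Ioi a⁻¹)) :=
    aemeasurable_restrict_of_monotoneOn measurableSet_Ioi hmono
  refine ((integrableOn_Ioi_comp_one_div_div_sq ha hint).const_mul √2).mono'
    ((hG.mul (Real.measurable_exp.comp_aemeasurable ((hG.pow_const 2).neg.div_const 2))).div
      aemeasurable_id).aestronglyMeasurable ?_
  filter_upwards [ae_restrict_mem measurableSet_Ioi] with l hl
  have hε := one_div_mem_Ioo_of_mem_Ioi_inv ha hl
  have hl0 : 0 < l := (inv_pos.2 ha).trans hl
  rw [Real.norm_of_nonneg (by have := Gfun_pos π l; positivity)]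
  calc Gfun π l * exp (-Gfun π l ^ 2 / 2) / l ≤ √2 * (1 / l * π (1 / l)) / l :=
        div_le_div_of_nonneg_right (Gfun_mul_exp_le (hpos _ hε) (hle _ hε)) hl0.le
    _ = √2 * (π (1 / l) / l ^ 2) := by field_simp

theorem G_maps_to_PsiInfty (π : ℝ → ℝ) (επ δπ : ℝ) (hπ : Assumption1 π επ δπ) :
    ∃ lam₀ > (0 : ℝ), ∃ δ > (0 : ℝ),
      (∀ l ∈ Set.Ioi lam₀, 0 < Gfun π l) ∧
      MonotoneOn (Gfun π) (Set.Ioi lam₀) ∧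
      MeasureTheory.IntegrableOn
        (fun l => Gfun π l * Real.exp (-(Gfun π l) ^ 2 / 2) / l) (Set.Ioi lam₀) ∧
      (∀ l ∈ Set.Ioi lam₀, δ < l * Gfun π l * Real.exp (-(Gfun π l) ^ 2 / 2)) ∧
      ∃ M δψ, Assumption2 (Gfun π) M δψ := by
  obtain ⟨hεπ, hδπ, -, hint, hlb, hmono⟩ := hπ
  have hintπ : IntegrableOn π (Ioo 0 επ) :=
    hint.mono_set (Ioo_subset_Icc_self.trans (Icc_subset_Icc_right hεπ.2.le))
  obtain ⟨ε₁, hε₁, hsmall⟩ :=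
    exists_mem_Ioo_mul_lt_of_integrableOn hεπ.1 (Real.exp_pos (-1 / 2)) hintπ
  have hsub : Ioo 0 ε₁ ⊆ Ioo 0 επ := Ioo_subset_Ioo_right hε₁.2.le
  have hpos : ∀ ε ∈ Ioo 0 ε₁, 0 < ε * π ε :=
    fun ε hε => mul_pos hε.1 (hδπ.trans_le (hlb ε (hsub hε)))
  have hle : ∀ ε ∈ Ioo 0 ε₁, ε * π ε ≤ exp (-1 / 2) :=
    fun ε hε => (hmono (hsub hε) hε₁ hε.2.le).trans hsmall.le
  have hGpos : ∀ l ∈ Ioi ε₁⁻¹, 0 < Gfun π l := fun l _ => Gfun_pos π l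
  have hGmono := Gfun_monotoneOn hε₁.1 (hmono.mono hsub) hpos
  have hGint := integrableOn_Gfun_mul_exp_div hε₁.1 (hintπ.mono_set hsub) hpos hle hGmono
  have hGlow : ∀ l ∈ Ioi ε₁⁻¹, δπ / 2 < l * Gfun π l * exp (-Gfun π l ^ 2 / 2) := by
    intro l hl
    have hε := one_div_mem_Ioo_of_mem_Ioi_inv hε₁.1 hl
    have hl0 : 0 < l := (inv_pos.2 hε₁.1).trans hl
    calc δπ / 2 < π (1 / l) := (half_lt_self hδπ).trans_le (hlb _ (hsub hε))
      _ = l * (1 / l * π (1 / l)) := by field_simp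
      _ ≤ l * Gfun π l * exp (-Gfun π l ^ 2 / 2) := by
        rw [mul_assoc]
        exact mul_le_mul_of_nonneg_left (one_div_mul_le_Gfun_mul_exp (hpos _ hε) (hle _ hε)) hl0.le
  have hlam₀ : 0 < ε₁⁻¹ := inv_pos.2 hε₁.1
  exact ⟨ε₁⁻¹, hlam₀, δπ / 2, half_pos hδπ, hGpos, hGmono, hGint, hGlow,
    ε₁⁻¹, δπ / 2, hlam₀, half_pos hδπ, hGpos, hGmono, hGint, hGlow⟩
end

section
/- Let π satisfy Assumption 1. Then lim_{ε↓0} F[G[π]](ε)/π(ε) = 1; moreover, for all sufficiently small ε > 0, F[G[π]](ε) = π(ε)·√((β(ε) + ln β(ε))/β(ε)), where β(ε) = -2·ln(ε·π(ε)). -/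
open MeasureTheory Filter Set

/-!
Write `β = -2 log (ε π(ε))`. Since `G[π](1/ε)² = β + log β`, the Gaussian factor of `F[G[π]](ε)`
is `exp (-(β + log β)/2) = ε π(ε) / √β`, so `F[G[π]](ε) = π(ε) √((β + log β)/β)` as soon as
`β ≥ 1`. The ratio tends to `1` because `β → ∞`, i.e. `ε π(ε) → 0`: were `ε π(ε)` bounded below
by some `c > 0` near `0`, the prior would dominate `c/ε` and fail to be integrable.
-/

open Topology

theorem not_integrableOn_Ioo_zero_of_le_mul_norm {E : Type*} [NormedAddCommGroup E]
    {g : ℝ → E} {b c : ℝ} (hb : 0 < b) (hc : 0 < c) (h : ∀ x ∈ Ioo 0 b, c ≤ x * ‖g x‖) :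
    ¬IntegrableOn g (Ioo 0 b) := by
  intro hg
  have hinv : IntegrableOn (fun x : ℝ => x⁻¹) (Ioo 0 b) := by
    refine (hg.norm.const_mul c⁻¹).mono' ?_ ?_
    · exact (continuousOn_inv₀.mono fun x hx => hx.1.ne').aestronglyMeasurable measurableSet_Ioo
    · filter_upwards [ae_restrict_mem measurableSet_Ioo] with x hx
      rw [Real.norm_of_nonneg (inv_nonneg.2 hx.1.le), inv_le_iff_one_le_mul₀ hx.1,
        mul_assoc, le_inv_mul_iff₀ hc, mul_one, mul_comm]
      exact h x hx
  have := (intervalIntegrable_iff_integrableOn_Ioo_of_le hb.le).2 hinv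
  simp [intervalIntegrable_inv_iff, hb.ne, hb.le] at this

theorem tendsto_mul_self_nhdsGT_zero_of_monotoneOn {g : ℝ → ℝ} {a : ℝ} (ha : 0 < a)
    (hg : IntegrableOn g (Ioo 0 a)) (hmono : MonotoneOn (fun x => x * g x) (Ioo 0 a)) :
    Tendsto (fun x => x * g x) (𝓝[>] 0) (𝓝 0) := by
  have mul_abs_eq {x : ℝ} (hx : 0 < x) : x * ‖g x‖ = |x * g x| := by
    rw [Real.norm_eq_abs, abs_mul, abs_of_pos hx]
  rw [tendsto_order]
  constructor
  · intro c hc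
    by_cases hlow : ∃ y ∈ Ioo 0 a, y * g y ≤ c
    · obtain ⟨y, hy, hyc⟩ := hlow
      refine absurd (hg.mono_set (Ioo_subset_Ioo_right hy.2.le))
        (not_integrableOn_Ioo_zero_of_le_mul_norm hy.1 (neg_pos.2 hc) fun x hx => ?_)
      have := hmono ⟨hx.1, hx.2.trans hy.2⟩ hy hx.2.le
      rw [mul_abs_eq hx.1]
      linarith [neg_abs_le (x * g x)]
    · push Not at hlow
      filter_upwards [Ioo_mem_nhdsGT ha] using hlow
  · intro c hc
    by_cases hup : ∃ y ∈ Ioo 0 a, y * g y < c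
    · obtain ⟨y, hy, hyc⟩ := hup
      filter_upwards [Ioo_mem_nhdsGT hy.1] with x hx
      exact (hmono ⟨hx.1, hx.2.trans hy.2⟩ hy hx.2.le).trans_lt hyc
    · push Not at hup
      refine absurd hg (not_integrableOn_Ioo_zero_of_le_mul_norm ha hc fun x hx => ?_)
      rw [mul_abs_eq hx.1]
      exact (hup x hx).trans (le_abs_self _)

namespace Assumption1

variable {π : ℝ → ℝ} {επ δπ : ℝ}

theorem eventually_pos (hπ : Assumption1 π επ δπ) : ∀ᶠ ε in 𝓝[>] 0, 0 < π ε := by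
  obtain ⟨hεπ, hδ, -, -, hlb, -⟩ := hπ
  filter_upwards [Ioo_mem_nhdsGT hεπ.1] with ε hε
  exact hδ.trans_le (hlb ε hε)

theorem tendsto_mul_self (hπ : Assumption1 π επ δπ) :
    Tendsto (fun ε => ε * π ε) (𝓝[>] 0) (𝓝[>] 0) := by
  obtain ⟨hεπ, -, -, hint, -, hmono⟩ := id hπ
  refine tendsto_nhdsWithin_iff.2 ⟨tendsto_mul_self_nhdsGT_zero_of_monotoneOn hεπ.1
    (hint.mono_set fun x hx => ⟨hx.1.le, hx.2.le.trans hεπ.2.le⟩) hmono, ?_⟩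
  filter_upwards [self_mem_nhdsWithin, hπ.eventually_pos] with ε hε hπε
  exact mul_pos hε hπε

theorem tendsto_neg_two_mul_log (hπ : Assumption1 π επ δπ) :
    Tendsto (fun ε => -2 * Real.log (ε * π ε)) (𝓝[>] 0) atTop :=
  (Real.tendsto_log_nhdsGT_zero.comp hπ.tendsto_mul_self).const_mul_atBot_of_neg (by norm_num)

end Assumption1

theorem Ffun_Gfun_eq (π : ℝ → ℝ) {ε : ℝ} (hp : 0 < ε * π ε)
    (h1 : 1 ≤ -2 * Real.log (ε * π ε)) :
    Ffun (Gfun π) ε = π ε * Real.sqrt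
      ((-2 * Real.log (ε * π ε) + Real.log (-2 * Real.log (ε * π ε))) /
        (-2 * Real.log (ε * π ε))) := by
  set β := -2 * Real.log (ε * π ε) with hβ
  have hβpos : 0 < β := one_pos.trans_le h1
  have hsum : 0 ≤ β + Real.log β := add_nonneg hβpos.le (Real.log_nonneg h1)
  have hsqrt : 0 < Real.sqrt β := Real.sqrt_pos.2 hβpos
  have hexp : Real.exp (-(β + Real.log β) / 2) = ε * π ε / Real.sqrt β := by
    have hexponent : -(β + Real.log β) / 2 = Real.log (ε * π ε) - Real.log (Real.sqrt β) := by
      rw [Real.log_sqrt hβpos.le, hβ]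
      ring
    rw [hexponent, Real.exp_sub, Real.exp_log hp, Real.exp_log hsqrt]
  have hε : ε ≠ 0 := by rintro rfl; simp at hp
  rw [Ffun, Gfun, one_div_one_div, betaFun, max_eq_left h1, Real.sq_sqrt hsum, hexp,
    Real.sqrt_div hsum]
  field_simp

theorem tendsto_sqrt_add_log_div_self_atTop :
    Tendsto (fun t : ℝ => Real.sqrt ((t + Real.log t) / t)) atTop (𝓝 1) := by
  have hlog : Tendsto (fun t : ℝ => 1 + Real.log t / t) atTop (𝓝 1) := by
    simpa using tendsto_const_nhds.add Real.isLittleO_log_id_atTop.tendsto_div_nhds_zero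
  have hdiv : Tendsto (fun t : ℝ => (t + Real.log t) / t) atTop (𝓝 1) := by
    refine hlog.congr' ?_
    filter_upwards [eventually_ne_atTop 0] with t ht
    rw [add_div, div_self ht]
  simpa using hdiv.sqrt

theorem FG_asymptotic_identity (π : ℝ → ℝ) (επ δπ : ℝ) (hπ : Assumption1 π επ δπ) :
    Filter.Tendsto (fun ε => Ffun (Gfun π) ε / π ε) (nhdsWithin 0 (Set.Ioi 0)) (nhds 1) ∧
    ∀ᶠ ε in nhdsWithin (0 : ℝ) (Set.Ioi 0),
      Ffun (Gfun π) ε =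
        π ε * Real.sqrt
          ((-2 * Real.log (ε * π ε) + Real.log (-2 * Real.log (ε * π ε))) /
            (-2 * Real.log (ε * π ε))) := by
  have hβ := hπ.tendsto_neg_two_mul_log
  have hid : ∀ᶠ ε in 𝓝[>] 0, Ffun (Gfun π) ε = π ε * Real.sqrt
      ((-2 * Real.log (ε * π ε) + Real.log (-2 * Real.log (ε * π ε))) /
        (-2 * Real.log (ε * π ε))) := by
    filter_upwards [self_mem_nhdsWithin, hπ.eventually_pos, hβ.eventually_ge_atTop 1]
      with ε hε hπε h1
    exact Ffun_Gfun_eq π (mul_pos hε hπε) h1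
  refine ⟨(tendsto_sqrt_add_log_div_self_atTop.comp hβ).congr' ?_, hid⟩
  filter_upwards [hid, hπ.eventually_pos] with ε h hπε
  rw [h, mul_div_cancel_left₀ _ hπε.ne', Function.comp_apply]
end

section
/- Let ψ satisfy Assumption 2. Then for all sufficiently large λ one has G[F[ψ]](λ) = √(ψ(λ)² - 2·ln ψ(λ) + ln(ψ(λ)² - 2·ln ψ(λ))) and G[F[ψ]](λ) < ψ(λ). -/
open MeasureTheory Filter Set

/-! At `ε = 1/λ` one has `ε·F[ψ](ε) = ψ(λ) e^{-ψ(λ)²/2}`, so `β(1/λ) = ψ(λ)² - 2 ln ψ(λ)` as soon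
as `ψ(λ) > 0`: the maximum with `1` is inactive because `x² - 2 ln x ≥ x² - 2x + 2 ≥ 1`. This gives
the formula for `G[F[ψ]]`, and `G[F[ψ]](λ) < ψ(λ)` then amounts to `ψ² - 2 ln ψ < ψ²`, i.e.
`ψ(λ) > 1`, which holds eventually because the integrability condition forces `ψ → ∞`. -/

namespace Real

theorem one_le_sq_sub_two_mul_log {x : ℝ} (hx : 0 < x) : 1 ≤ x ^ 2 - 2 * log x := by
  nlinarith [log_le_sub_one_of_pos hx, sq_nonneg (x - 1)]

theorem sqrt_sq_sub_two_mul_log_add_log_lt {x : ℝ} (hx : 1 < x) :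
    √(x ^ 2 - 2 * log x + log (x ^ 2 - 2 * log x)) < x := by
  have hlog : 0 < log x := log_pos hx
  have hbeta : 1 ≤ x ^ 2 - 2 * log x := one_le_sq_sub_two_mul_log (by linarith)
  have hlt : log (x ^ 2 - 2 * log x) < log (x ^ 2) := log_lt_log (by linarith) (by linarith)
  rw [log_pow, Nat.cast_ofNat] at hlt
  rw [sqrt_lt' (by linarith)]
  linarith

end Real

/-- Were `ψ` bounded by `b`, the integrand would dominate `ψ(a) e^{-b²/2} / λ` past any `a > M`,
and `1 / λ` is not integrable at infinity. -/
theorem exists_lt_of_integrableOn_Ioi {ψ : ℝ → ℝ} {M : ℝ} (hpos : ∀ l ∈ Ioi M, 0 < ψ l)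
    (hmono : MonotoneOn ψ (Ioi M))
    (hint : IntegrableOn (fun l => ψ l * Real.exp (-(ψ l) ^ 2 / 2) / l) (Ioi M)) (b : ℝ) :
    ∃ l ∈ Ioi M, b < ψ l := by
  by_contra! hbdd
  obtain ⟨a, haM, ha0⟩ : ∃ a ∈ Ioi M, 0 < a :=
    ⟨|M| + 1, mem_Ioi.2 (by linarith [le_abs_self M]), by positivity⟩
  set c := ψ a * Real.exp (-b ^ 2 / 2)
  have hc : 0 < c := mul_pos (hpos _ haM) (Real.exp_pos _)
  have hsub : Ioi a ⊆ Ioi M := Ioi_subset_Ioi haM.out.le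
  have hdom : ∀ l ∈ Ioi a, c * l⁻¹ ≤ ψ l * Real.exp (-(ψ l) ^ 2 / 2) / l := by
    intro l hl
    have hlM : l ∈ Ioi M := hsub hl
    have hψa : 0 < ψ a := hpos _ haM
    have hψl : ψ a ≤ ψ l := hmono haM hlM hl.out.le
    have hψb : ψ l ≤ b := hbdd l hlM
    have hexp : Real.exp (-b ^ 2 / 2) ≤ Real.exp (-(ψ l) ^ 2 / 2) :=
      Real.exp_le_exp.2 (by nlinarith)
    rw [div_eq_mul_inv]
    have : 0 < l := ha0.trans hl.out
    gcongr
    exact mul_le_mul hψl hexp (Real.exp_pos _).le (hψa.le.trans hψl)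
  have hcinv : IntegrableOn (fun l : ℝ => c * l⁻¹) (Ioi a) := by
    refine (hint.mono_set hsub).mono' (by fun_prop) ?_
    filter_upwards [ae_restrict_mem measurableSet_Ioi] with l hl
    have : 0 < l := ha0.trans hl.out
    rw [Real.norm_of_nonneg (by positivity)]
    exact hdom l hl
  exact not_integrableOn_Ioi_inv ((integrable_const_mul_iff hc.ne'.isUnit _).1 hcinv)

theorem Assumption2.tendsto_atTop {ψ : ℝ → ℝ} {M δ : ℝ} (hψ : Assumption2 ψ M δ) :
    Tendsto ψ atTop atTop := by
  obtain ⟨-, -, hpos, hmono, hint, -⟩ := hψ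
  refine tendsto_atTop_atTop.2 fun b => ?_
  obtain ⟨l₀, hl₀M, hl₀⟩ := exists_lt_of_integrableOn_Ioi hpos hmono hint b
  exact ⟨l₀, fun l hl => hl₀.le.trans (hmono hl₀M (lt_of_lt_of_le hl₀M hl) hl)⟩

theorem one_div_mul_Ffun_one_div (ψ : ℝ → ℝ) {l : ℝ} (hl : l ≠ 0) :
    (1 / l) * Ffun ψ (1 / l) = ψ l * Real.exp (-(ψ l) ^ 2 / 2) := by
  simp only [Ffun, one_div_one_div]
  field_simp

theorem betaFun_Ffun_one_div {ψ : ℝ → ℝ} {l : ℝ} (hl : l ≠ 0) (hψl : 0 < ψ l) :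
    betaFun (Ffun ψ) (1 / l) = (ψ l) ^ 2 - 2 * Real.log (ψ l) := by
  rw [betaFun, one_div_mul_Ffun_one_div ψ hl, Real.log_mul hψl.ne' (Real.exp_pos _).ne', Real.log_exp,
    max_eq_left] <;>
  linarith [Real.one_le_sq_sub_two_mul_log hψl]

theorem Gfun_Ffun {ψ : ℝ → ℝ} {l : ℝ} (hl : l ≠ 0) (hψl : 0 < ψ l) :
    Gfun (Ffun ψ) l =
      √((ψ l) ^ 2 - 2 * Real.log (ψ l) + Real.log ((ψ l) ^ 2 - 2 * Real.log (ψ l))) := by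
  rw [Gfun, betaFun_Ffun_one_div hl hψl]

theorem GF_composition (ψ : ℝ → ℝ) (M δψ : ℝ) (hψ : Assumption2 ψ M δψ) :
    ∀ᶠ l in Filter.atTop,
      Gfun (Ffun ψ) l =
        Real.sqrt ((ψ l) ^ 2 - 2 * Real.log (ψ l) +
          Real.log ((ψ l) ^ 2 - 2 * Real.log (ψ l))) ∧
      Gfun (Ffun ψ) l < ψ l := by
  filter_upwards [hψ.tendsto_atTop.eventually_gt_atTop 1, eventually_gt_atTop 0] with l hψl hl
  have hG := Gfun_Ffun hl.ne' (one_pos.trans hψl)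
  exact ⟨hG, hG ▸ Real.sqrt_sq_sub_two_mul_log_add_log_lt hψl⟩
end
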